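/- Let M be an n×n real matrix with SVD M = UΣVᵀ, and let Δ₁, Δ₂ ∈ ℝ^{n×c}. Let P be a matrix whose columns form an orthonormal basis for the column space of (I − UUᵀ)Δ₁, and Q an orthonormal basis matrix for the column space of (I − VVᵀ)Δ₂. Set R₁ = Pᵀ(I − UUᵀ)Δ₁ and R₂ = Qᵀ(I − VVᵀ)Δ₂. Then M + Δ₁Δ₂ᵀ = [U P] H [V Q]ᵀ, where H = [[Σ, 0],[0, 0]] + [Uᵀ Δ₁; R₁][Vᵀ Δ₂; R₂]ᵀ. -/

import Mathlib

open Matrix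

/-!
Stacking `Uᵀ Δ` on top of `Pᵀ (I - U Uᵀ) Δ` splits `Δ` into its component in the column space
of `U` and the residual; since `P Pᵀ` fixes the residual, `[U P]` reassembles `Δ` from the two
blocks. Applied to `Δ₁` and `Δ₂`, this gives `[U P] [Uᵀ Δ₁; R₁] [Vᵀ Δ₂; R₂]ᵀ [V Q]ᵀ = Δ₁ Δ₂ᵀ`
for the low-rank part of `H`, while the block `[[Σ, 0], [0, 0]]` contributes `U Σ Vᵀ = M`.
-/

namespace Matrix

variable {R : Type*}

theorem fromCols_mul_fromBlocks_mul_transpose_fromCols [Semiring R]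
    {m k p k' q : Type*} [Fintype k] [Fintype p] [Fintype k'] [Fintype q]
    (U : Matrix m k R) (P : Matrix m p R) (A : Matrix k k' R) (B : Matrix k q R)
    (C : Matrix p k' R) (D : Matrix p q R) (V : Matrix m k' R) (Q : Matrix m q R) :
    fromCols U P * fromBlocks A B C D * (fromCols V Q)ᵀ =
      U * A * Vᵀ + P * C * Vᵀ + (U * B * Qᵀ + P * D * Qᵀ) := by
  rw [transpose_fromCols, fromCols_mul_fromBlocks, fromCols_mul_fromRows,
    Matrix.add_mul, Matrix.add_mul]

theorem fromCols_mul_fromRows_residual [Ring R]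
    {m k p c : Type*} [Fintype m] [DecidableEq m] [Fintype k] [Fintype p]
    {U : Matrix m k R} {P : Matrix m p R} {Δ : Matrix m c R}
    (hspan : P * (Pᵀ * ((1 - U * Uᵀ) * Δ)) = (1 - U * Uᵀ) * Δ) :
    fromCols U P * fromRows (Uᵀ * Δ) (Pᵀ * ((1 - U * Uᵀ) * Δ)) = Δ := by
  rw [fromCols_mul_fromRows, ← Matrix.mul_assoc, hspan, Matrix.sub_mul, Matrix.one_mul]
  abel

end Matrix

theorem tisvd_core_identity_general {n k c p q : ℕ}
    (M : Matrix (Fin n) (Fin n) ℝ)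
    (U : Matrix (Fin n) (Fin k) ℝ) (V : Matrix (Fin n) (Fin k) ℝ)
    (S : Matrix (Fin k) (Fin k) ℝ)
    (Δ₁ Δ₂ : Matrix (Fin n) (Fin c) ℝ)
    (P : Matrix (Fin n) (Fin p) ℝ) (Q : Matrix (Fin n) (Fin q) ℝ)
    -- SVD of M
    (hM : M = U * S * Vᵀ)
    -- P is an orthonormal basis for the column space of (I - U Uᵀ) Δ₁
    (hPspan : P * (Pᵀ * ((1 - U * Uᵀ) * Δ₁)) = (1 - U * Uᵀ) * Δ₁)
    -- Q is an orthonormal basis for the column space of (I - V Vᵀ) Δ₂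
    (hQspan : Q * (Qᵀ * ((1 - V * Vᵀ) * Δ₂)) = (1 - V * Vᵀ) * Δ₂)
    -- definitions of R₁, R₂ and H
    (R₁ : Matrix (Fin p) (Fin c) ℝ) (R₂ : Matrix (Fin q) (Fin c) ℝ)
    (hR₁ : R₁ = Pᵀ * ((1 - U * Uᵀ) * Δ₁))
    (hR₂ : R₂ = Qᵀ * ((1 - V * Vᵀ) * Δ₂))
    (H : Matrix (Fin k ⊕ Fin p) (Fin k ⊕ Fin q) ℝ)
    (hH : H = fromBlocks S 0 0 0 + fromRows (Uᵀ * Δ₁) R₁ * (fromRows (Vᵀ * Δ₂) R₂)ᵀ) :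
    M + Δ₁ * Δ₂ᵀ = fromCols U P * H * (fromCols V Q)ᵀ := by
  subst hM hR₁ hR₂ hH
  have hsvd : fromCols U P * (fromBlocks S 0 0 0 : Matrix (Fin k ⊕ Fin p) (Fin k ⊕ Fin q) ℝ) *
      (fromCols V Q)ᵀ = U * S * Vᵀ := by
    simp only [fromCols_mul_fromBlocks_mul_transpose_fromCols, Matrix.mul_zero, Matrix.zero_mul,
      add_zero]
  have hlow : fromCols U P * (fromRows (Uᵀ * Δ₁) (Pᵀ * ((1 - U * Uᵀ) * Δ₁)) *
      (fromRows (Vᵀ * Δ₂) (Qᵀ * ((1 - V * Vᵀ) * Δ₂)))ᵀ) * (fromCols V Q)ᵀ = Δ₁ * Δ₂ᵀ := by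
    rw [← Matrix.mul_assoc, fromCols_mul_fromRows_residual hPspan, Matrix.mul_assoc,
      ← transpose_mul, fromCols_mul_fromRows_residual hQspan]
  rw [Matrix.mul_add, Matrix.add_mul, hsvd, hlow]

/-- Core identity of the TISVD incremental SVD update:
`M + Δ₁ Δ₂ᵀ = [U P] H [V Q]ᵀ` where
`H = [[Σ, 0],[0, 0]] + [Uᵀ Δ₁; R₁] [Vᵀ Δ₂; R₂]ᵀ`. -/
theorem tisvd_core_identity {n k c p q : ℕ}
    (M : Matrix (Fin n) (Fin n) ℝ)
    (U : Matrix (Fin n) (Fin k) ℝ) (V : Matrix (Fin n) (Fin k) ℝ)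
    (S : Matrix (Fin k) (Fin k) ℝ) (σ : Fin k → ℝ)
    (Δ₁ Δ₂ : Matrix (Fin n) (Fin c) ℝ)
    (P : Matrix (Fin n) (Fin p) ℝ) (Q : Matrix (Fin n) (Fin q) ℝ)
    -- SVD of M
    (hS : S = Matrix.diagonal σ)
    (hM : M = U * S * Vᵀ)
    (hU : Uᵀ * U = 1) (hV : Vᵀ * V = 1)
    -- P is an orthonormal basis for the column space of (I - U Uᵀ) Δ₁
    (hP : Pᵀ * P = 1) (hUP : Uᵀ * P = 0)
    (hPspan : P * (Pᵀ * ((1 - U * Uᵀ) * Δ₁)) = (1 - U * Uᵀ) * Δ₁)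
    -- Q is an orthonormal basis for the column space of (I - V Vᵀ) Δ₂
    (hQ : Qᵀ * Q = 1) (hVQ : Vᵀ * Q = 0)
    (hQspan : Q * (Qᵀ * ((1 - V * Vᵀ) * Δ₂)) = (1 - V * Vᵀ) * Δ₂)
    -- definitions of R₁, R₂ and H
    (R₁ : Matrix (Fin p) (Fin c) ℝ) (R₂ : Matrix (Fin q) (Fin c) ℝ)
    (hR₁ : R₁ = Pᵀ * ((1 - U * Uᵀ) * Δ₁))
    (hR₂ : R₂ = Qᵀ * ((1 - V * Vᵀ) * Δ₂))
    (H : Matrix (Fin k ⊕ Fin p) (Fin k ⊕ Fin q) ℝ)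
    (hH : H = fromBlocks S 0 0 0 + fromRows (Uᵀ * Δ₁) R₁ * (fromRows (Vᵀ * Δ₂) R₂)ᵀ) :
    M + Δ₁ * Δ₂ᵀ = fromCols U P * H * (fromCols V Q)ᵀ :=
  tisvd_core_identity_general M U V S Δ₁ Δ₂ P Q hM hPspan hQspan R₁ R₂ hR₁ hR₂ H hH
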